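/- arXiv:2401.11655 — 2 statements merged into one kernel-verified Lean document; each statement's English description precedes it below -/
import Mathlib

section
/- Let (Ω, F, P) be a probability space and suppose that for almost every ω ∈ Ω there is a switched trajectory setup with random switching times t₀ < t₁(ω) < t₂(ω) < ⋯ → ∞, random modes i_k(ω) in a fixed finite set 𝕊, and a continuous trajectory x(ω,·) : [t₀,∞) → ℝⁿ, with fixed class-K∞ functions α₁, α₂ such that α₁(‖y‖) ≤ V_i(t,y) ≤ α₂(‖y‖) for all i, t, y, fixed continuous λ_i and constants μ_i ≥ 1, for which the Lyapunov conditions (ii) and (iii) hold pathwise. Assume: (a) almost surely g_ω(t)/(t − t₀) converges as t → ∞ to a strictly negative (possibly random) limit, where g_ω is the drift functional of the path ω; and (b) there exists a deterministic constant M ≥ 1 with sup_{t ≥ t₀} g_ω(t) ≤ ln M almost surely. Then: (1) for every ε > 0 there exists δ > 0 such that whenever ‖x(ω, t₀)‖ < δ for almost every ω, P[ sup_{t ≥ t₀} ‖x(t)‖ < ε ] = 1; and (2) P[ x(t) → 0 as t → ∞ ] = 1. -/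
open Set Filter MeasureTheory intervalIntegral Topology

/-- A function `α : [0,∞) → [0,∞)` is of class K∞ if it is continuous, strictly
increasing, vanishes at `0`, and tends to infinity. -/
def IsClassKInf (α : ℝ → ℝ) : Prop :=
  ContinuousOn α (Set.Ici 0) ∧ StrictMonoOn α (Set.Ici 0) ∧ α 0 = 0 ∧
    (∀ s ≥ (0 : ℝ), 0 ≤ α s) ∧ Filter.Tendsto α Filter.atTop Filter.atTop

/-- Grönwall-type bound on one interval. -/
lemma gronwall_aux (f lf : ℝ → ℝ) (a b : ℝ) (hl : Continuous lf)
    (hf : ContinuousOn f (Set.Icc a b)) (hd : DifferentiableOn ℝ f (Set.Ioo a b))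
    (hder : ∀ s ∈ Set.Ioo a b, deriv f s ≤ lf s * f s) :
    ∀ t ∈ Set.Icc a b, f t ≤ f a * Real.exp (∫ h in a..t, lf h) := by
  intro t ht
  set I : ℝ → ℝ := fun u => ∫ h in a..u, lf h with hI
  have hIda : ∀ u : ℝ, HasDerivAt I (lf u) u := fun u =>
    integral_hasDerivAt_right (hl.intervalIntegrable a u)
      hl.aestronglyMeasurable.stronglyMeasurableAtFilter hl.continuousAt
  have hIcont : Continuous I := by
    refine continuous_iff_continuousAt.2 fun u => (hIda u).continuousAt
  set F : ℝ → ℝ := fun u => f u * Real.exp (-I u) with hF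
  have hanti : AntitoneOn F (Set.Icc a b) := by
    apply antitoneOn_of_deriv_nonpos (convex_Icc a b)
    · exact hf.mul ((hIcont.neg.rexp).continuousOn)
    · rw [interior_Icc]
      intro u hu
      have hfd : DifferentiableAt ℝ f u :=
        (hd u hu).differentiableAt (isOpen_Ioo.mem_nhds hu)
      exact (hfd.mul (((hIda u).neg.exp).differentiableAt)).differentiableWithinAt
    · rw [interior_Icc]
      intro u hu
      have hfd : DifferentiableAt ℝ f u :=
        (hd u hu).differentiableAt (isOpen_Ioo.mem_nhds hu)
      have hFd : HasDerivAt F (deriv f u * Real.exp (-I u) +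
          f u * (Real.exp (-I u) * -lf u)) u :=
        hfd.hasDerivAt.mul (((hIda u).neg).exp)
      rw [hFd.deriv]
      have h1 : deriv f u - lf u * f u ≤ 0 := sub_nonpos.2 (hder u hu)
      have h2 : (0:ℝ) < Real.exp (-I u) := Real.exp_pos _
      nlinarith
  have h1 : F t ≤ F a := hanti (left_mem_Icc.2 (ht.1.trans ht.2)) ht ht.1
  have hIa : I a = 0 := intervalIntegral.integral_same
  have hFa : F a = f a := by simp [hF, hIa]
  rw [hFa] at h1
  have h2 : f t = F t * Real.exp (I t) := by
    simp [hF, mul_assoc, ← Real.exp_add]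
  rw [h2]
  calc F t * Real.exp (I t) ≤ f a * Real.exp (I t) :=
        mul_le_mul_of_nonneg_right h1 (Real.exp_pos _).le
    _ = _ := rfl

/-- Pathwise key estimate for a single switched trajectory. -/
lemma core_aux {𝕊 : Type*} (t₀ : ℝ) (τ : ℕ → ℝ) (ι : ℕ → 𝕊) (σω : ℝ → 𝕊)
    (hτ0 : τ 0 = t₀) (hmono : StrictMono τ) (htop : Tendsto τ atTop atTop)
    (hσ : ∀ k, ∀ s ∈ Set.Ico (τ k) (τ (k + 1)), σω s = ι k)
    (lam : 𝕊 → ℝ → ℝ) (hlam : ∀ i, Continuous (lam i))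
    (μ : 𝕊 → ℝ) (hμ : ∀ i, 1 ≤ μ i)
    (W : 𝕊 → ℝ → ℝ)
    (hW_cont : ∀ k, ContinuousOn (W (ι k)) (Set.Icc (τ k) (τ (k + 1))))
    (hW_diff : ∀ k, DifferentiableOn ℝ (W (ι k)) (Set.Ioo (τ k) (τ (k + 1))))
    (hW_deriv : ∀ k, ∀ s ∈ Set.Ioo (τ k) (τ (k + 1)),
      deriv (W (ι k)) s ≤ lam (ι k) s * W (ι k) s)
    (hjump : ∀ k, W (ι (k + 1)) (τ (k + 1)) ≤ μ (ι (k + 1)) * W (ι k) (τ (k + 1))) :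
    ∀ t ≥ t₀, ∃ k, t ∈ Set.Ico (τ k) (τ (k + 1)) ∧
      W (ι k) t ≤ W (ι 0) t₀ * Real.exp ((∫ h in t₀..t, lam (σω h) h) +
        ∑ l ∈ Finset.Icc 1 k, Real.log (μ (ι l))) := by
  set lσ : ℝ → ℝ := fun h => lam (σω h) h with hlσ
  -- a.e. equality on each interval
  have hae : ∀ k, ∀ t ∈ Set.Icc (τ k) (τ (k + 1)),
      ∀ᵐ s ∂(volume : Measure ℝ), s ∈ Set.Ioc (τ k) t → lσ s = lam (ι k) s := by
    intro k t ht
    have hne : ∀ᵐ (s : ℝ), s ≠ τ (k + 1) := by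
      rw [MeasureTheory.ae_iff]
      simpa using MeasureTheory.measure_singleton (μ := volume) (τ (k + 1))
    filter_upwards [hne] with s hs hmem
    have hlt : s < τ (k + 1) := lt_of_le_of_ne (hmem.2.trans ht.2) hs
    simp only [hlσ]
    rw [hσ k s ⟨hmem.1.le, hlt⟩]
  -- piecewise integrability and integral identification
  have hpiece : ∀ k, ∀ t ∈ Set.Icc (τ k) (τ (k + 1)),
      IntervalIntegrable lσ volume (τ k) t ∧
        (∫ h in τ k..t, lσ h) = ∫ h in τ k..t, lam (ι k) h := by
    intro k t ht
    have hle : τ k ≤ t := ht.1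
    have hint : IntervalIntegrable lσ volume (τ k) t := by
      rw [intervalIntegrable_iff, Set.uIoc_of_le hle]
      have h2 := ((hlam (ι k)).intervalIntegrable (μ := volume) (τ k) t)
      rw [intervalIntegrable_iff, Set.uIoc_of_le hle] at h2
      have hres : lσ =ᵐ[volume.restrict (Set.Ioc (τ k) t)] fun h => lam (ι k) h :=
        (MeasureTheory.ae_restrict_iff' measurableSet_Ioc).2 (hae k t ht)
      exact h2.congr hres.symm
    refine ⟨hint, ?_⟩
    apply intervalIntegral.integral_congr_ae
    rw [Set.uIoc_of_le hle]
    exact hae k t ht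
  -- integrability from t₀
  have hint0 : ∀ k, IntervalIntegrable lσ volume t₀ (τ k) := by
    intro k
    induction k with
    | zero => exact hτ0 ▸ IntervalIntegrable.refl
    | succ k ih =>
      exact ih.trans (hpiece k (τ (k + 1))
        (Set.right_mem_Icc.2 (hmono (Nat.lt_succ_self k)).le)).1
  -- main induction
  have main : ∀ k, ∀ t ∈ Set.Icc (τ k) (τ (k + 1)),
      W (ι k) t ≤ W (ι 0) t₀ * Real.exp ((∫ h in t₀..t, lσ h) +
        ∑ l ∈ Finset.Icc 1 k, Real.log (μ (ι l))) := by
    intro k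
    induction k with
    | zero =>
      intro t ht
      have h1 := gronwall_aux (W (ι 0)) (lam (ι 0)) (τ 0) (τ 1) (hlam _)
        (hW_cont 0) (hW_diff 0) (hW_deriv 0) t ht
      rw [← (hpiece 0 t ht).2, hτ0] at h1
      simpa using h1
    | succ k ih =>
      intro t ht
      have hkk : τ (k + 1) ∈ Set.Icc (τ k) (τ (k + 1)) :=
        Set.right_mem_Icc.2 (hmono (Nat.lt_succ_self k)).le
      have h1 := ih (τ (k + 1)) hkk
      have hμpos : (0 : ℝ) < μ (ι (k + 1)) := lt_of_lt_of_le one_pos (hμ _)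
      have hsum : ∑ l ∈ Finset.Icc 1 (k + 1), Real.log (μ (ι l)) =
          (∑ l ∈ Finset.Icc 1 k, Real.log (μ (ι l))) + Real.log (μ (ι (k + 1))) := by
        rw [show Finset.Icc 1 (k + 1) = Finset.Ioc 0 (k + 1) from Finset.Icc_add_one_left_eq_Ioc 0 (k + 1),
          show Finset.Icc 1 k = Finset.Ioc 0 k from Finset.Icc_add_one_left_eq_Ioc 0 k,
          Finset.sum_Ioc_succ_top (Nat.zero_le k)]
      have h2 : W (ι (k + 1)) (τ (k + 1)) ≤ W (ι 0) t₀ *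
          Real.exp ((∫ h in t₀..τ (k + 1), lσ h) +
            ∑ l ∈ Finset.Icc 1 (k + 1), Real.log (μ (ι l))) := by
        calc W (ι (k + 1)) (τ (k + 1)) ≤ μ (ι (k + 1)) * W (ι k) (τ (k + 1)) := hjump k
          _ ≤ μ (ι (k + 1)) * (W (ι 0) t₀ * Real.exp ((∫ h in t₀..τ (k + 1), lσ h) +
              ∑ l ∈ Finset.Icc 1 k, Real.log (μ (ι l)))) :=
            mul_le_mul_of_nonneg_left h1 hμpos.le
          _ = _ := by
            rw [hsum, ← add_assoc,
              Real.exp_add ((∫ h in t₀..τ (k + 1), lσ h) +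
                ∑ l ∈ Finset.Icc 1 k, Real.log (μ (ι l))) (Real.log (μ (ι (k + 1)))),
              Real.exp_log hμpos]
            ring
      have h3 := gronwall_aux (W (ι (k + 1))) (lam (ι (k + 1))) (τ (k + 1)) (τ (k + 2))
        (hlam _) (hW_cont (k + 1)) (hW_diff (k + 1)) (hW_deriv (k + 1)) t ht
      rw [← (hpiece (k + 1) t ht).2] at h3
      have hsplit : (∫ h in t₀..τ (k + 1), lσ h) + (∫ h in τ (k + 1)..t, lσ h) =
          ∫ h in t₀..t, lσ h :=
        intervalIntegral.integral_add_adjacent_intervals (hint0 (k + 1)) (hpiece (k + 1) t ht).1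
      calc W (ι (k + 1)) t ≤ W (ι (k + 1)) (τ (k + 1)) *
            Real.exp (∫ h in τ (k + 1)..t, lσ h) := h3
        _ ≤ (W (ι 0) t₀ * Real.exp ((∫ h in t₀..τ (k + 1), lσ h) +
              ∑ l ∈ Finset.Icc 1 (k + 1), Real.log (μ (ι l)))) *
            Real.exp (∫ h in τ (k + 1)..t, lσ h) :=
          mul_le_mul_of_nonneg_right h2 (Real.exp_pos _).le
        _ = _ := by
          rw [mul_assoc, ← Real.exp_add, ← hsplit]; ring_nf
  -- locate the interval containing t
  intro t hht
  have hex : ∃ m, t < τ m := (htop.eventually (eventually_gt_atTop t)).exists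
  have hm : t < τ (Nat.find hex) := Nat.find_spec hex
  have hm0 : Nat.find hex ≠ 0 := by
    intro h
    rw [h, hτ0] at hm
    exact absurd hht (not_le.2 hm)
  obtain ⟨k, hk'⟩ := Nat.exists_eq_succ_of_ne_zero hm0
  rw [hk'] at hm
  have hk : τ k ≤ t := not_lt.1 (Nat.find_min hex (hk' ▸ Nat.lt_succ_self k))
  exact ⟨k, ⟨hk, hm⟩, main k t ⟨hk, hm.le⟩⟩

/-- Almost-sure global uniform asymptotic stability for randomly switched time-varying
systems, stated conditionally on the ergodic drift limit: if almost surely the drift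
functional satisfies `g_ω(t)/(t - t₀) →` (a strictly negative limit) and `g_ω` is
uniformly bounded above by `ln M`, then the system is almost surely uniformly stable and
almost surely the trajectory converges to the origin. -/
theorem stmt_11 {Ω : Type*} [MeasurableSpace Ω] (P : Measure Ω) [IsProbabilityMeasure P]
    {𝕊 : Type*} [Fintype 𝕊] (n : ℕ) (t₀ : ℝ)
    -- random switching times and modes
    (tms : Ω → ℕ → ℝ) (idx : Ω → ℕ → 𝕊)
    (htms : ∀ᵐ ω ∂P, tms ω 0 = t₀ ∧ StrictMono (tms ω) ∧
      Filter.Tendsto (tms ω) Filter.atTop Filter.atTop)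
    -- random switching signal
    (σf : Ω → ℝ → 𝕊)
    (hσ : ∀ᵐ ω ∂P, ∀ k, ∀ s ∈ Set.Ico (tms ω k) (tms ω (k + 1)), σf ω s = idx ω k)
    -- random trajectory
    (x : Ω → ℝ → EuclideanSpace ℝ (Fin n))
    (hx_cont : ∀ᵐ ω ∂P, ContinuousOn (x ω) (Set.Ici t₀))
    -- fixed data
    (lam : 𝕊 → ℝ → ℝ) (hlam : ∀ i, Continuous (lam i))
    (μ : 𝕊 → ℝ) (hμ : ∀ i, 1 ≤ μ i)
    (V : 𝕊 → ℝ → EuclideanSpace ℝ (Fin n) → ℝ)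
    (α₁ α₂ : ℝ → ℝ) (hα₁ : IsClassKInf α₁) (hα₂ : IsClassKInf α₂)
    (hsandwich : ∀ i, ∀ s ≥ t₀, ∀ y : EuclideanSpace ℝ (Fin n),
      α₁ ‖y‖ ≤ V i s y ∧ V i s y ≤ α₂ ‖y‖)
    -- pathwise Lyapunov condition (ii)
    (hV_cont : ∀ᵐ ω ∂P, ∀ k, ContinuousOn (fun s => V (idx ω k) s (x ω s))
      (Set.Icc (tms ω k) (tms ω (k + 1))))
    (hV_diff : ∀ᵐ ω ∂P, ∀ k, DifferentiableOn ℝ (fun s => V (idx ω k) s (x ω s))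
      (Set.Ioo (tms ω k) (tms ω (k + 1))))
    (hV_deriv : ∀ᵐ ω ∂P, ∀ k, ∀ s ∈ Set.Ioo (tms ω k) (tms ω (k + 1)),
      deriv (fun s' => V (idx ω k) s' (x ω s')) s ≤ lam (idx ω k) s * V (idx ω k) s (x ω s))
    -- pathwise Lyapunov condition (iii)
    (hjump : ∀ᵐ ω ∂P, ∀ k, V (idx ω (k + 1)) (tms ω (k + 1)) (x ω (tms ω (k + 1))) ≤
      μ (idx ω (k + 1)) * V (idx ω k) (tms ω (k + 1)) (x ω (tms ω (k + 1))))
    -- pathwise drift functional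
    (g : Ω → ℝ → ℝ)
    (hg : ∀ᵐ ω ∂P, ∀ k, ∀ s ∈ Set.Ico (tms ω k) (tms ω (k + 1)),
      g ω s = (∫ h in t₀..s, lam (σf ω h) h) +
        ∑ l ∈ Finset.Icc 1 k, Real.log (μ (idx ω l)))
    -- (a) almost surely the drift ratio converges to a strictly negative limit
    (ha : ∀ᵐ ω ∂P, ∃ L < (0 : ℝ),
      Filter.Tendsto (fun s => g ω s / (s - t₀)) Filter.atTop (nhds L))
    -- (b) a deterministic uniform upper bound on the drift
    (M : ℝ) (hM : 1 ≤ M) (hb : ∀ᵐ ω ∂P, ∀ s ≥ t₀, g ω s ≤ Real.log M) :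
    (∀ ε > (0 : ℝ), ∃ δ > (0 : ℝ),
      (∀ᵐ ω ∂P, ‖x ω t₀‖ < δ) → (∀ᵐ ω ∂P, ∀ s ≥ t₀, ‖x ω s‖ < ε)) ∧
    (∀ᵐ ω ∂P, Filter.Tendsto (fun s => x ω s) Filter.atTop (nhds 0)) := by
  obtain ⟨hα₁c, hα₁m, hα₁0, hα₁nn, hα₁top⟩ := hα₁
  obtain ⟨hα₂c, hα₂m, hα₂0, hα₂nn, hα₂top⟩ := hα₂
  -- the pathwise key estimate
  have key : ∀ᵐ ω ∂P, ∀ t ≥ t₀, α₁ ‖x ω t‖ ≤ α₂ ‖x ω t₀‖ * Real.exp (g ω t) := by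
    filter_upwards [htms, hσ, hV_cont, hV_diff, hV_deriv, hjump, hg] with ω
      h1 h2 h3 h4 h5 h6 h7
    intro t ht
    obtain ⟨hτ0, hmono, htop⟩ := h1
    obtain ⟨k, hk, hle⟩ := core_aux t₀ (tms ω) (idx ω) (σf ω) hτ0 hmono htop h2 lam hlam μ hμ
      (fun i s => V i s (x ω s)) h3 h4 h5 h6 t ht
    have hg_eq := h7 k t hk
    calc α₁ ‖x ω t‖ ≤ V (idx ω k) t (x ω t) := (hsandwich _ t ht _).1
      _ ≤ V (idx ω 0) t₀ (x ω t₀) * Real.exp ((∫ h in t₀..t, lam (σf ω h) h) +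
          ∑ l ∈ Finset.Icc 1 k, Real.log (μ (idx ω l))) := hle
      _ ≤ α₂ ‖x ω t₀‖ * Real.exp (g ω t) := by
        rw [hg_eq]
        exact mul_le_mul_of_nonneg_right (hsandwich _ t₀ le_rfl _).2 (Real.exp_pos _).le
  have hM0 : (0 : ℝ) < M := lt_of_lt_of_le one_pos hM
  have hα₁pos : ∀ ε : ℝ, 0 < ε → 0 < α₁ ε := by
    intro ε hε
    have := hα₁m (Set.mem_Ici.2 le_rfl) (Set.mem_Ici.2 hε.le) hε
    rwa [hα₁0] at this
  constructor
  · -- stability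
    intro ε hε
    have hc : 0 < α₁ ε / M := div_pos (hα₁pos ε hε) hM0
    have hcont : ContinuousWithinAt α₂ (Set.Ici 0) 0 := hα₂c 0 (Set.mem_Ici.2 le_rfl)
    obtain ⟨δ, hδ, hδ'⟩ := Metric.continuousWithinAt_iff.1 hcont (α₁ ε / M) hc
    refine ⟨δ, hδ, fun hinit => ?_⟩
    filter_upwards [key, hb, hinit] with ω hkey hbω h0
    intro s hs
    have hv : α₂ ‖x ω t₀‖ < α₁ ε / M := by
      have hd : dist ‖x ω t₀‖ (0 : ℝ) < δ := by
        rw [Real.dist_eq, sub_zero, abs_of_nonneg (norm_nonneg _)]; exact h0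
      have := hδ' (Set.mem_Ici.2 (norm_nonneg _)) hd
      rw [Real.dist_eq, hα₂0, sub_zero] at this
      exact (le_abs_self _).trans_lt this
    have h2 : Real.exp (g ω s) ≤ M := by
      calc Real.exp (g ω s) ≤ Real.exp (Real.log M) := Real.exp_le_exp.2 (hbω s hs)
        _ = M := Real.exp_log hM0
    have h3 : α₁ ‖x ω s‖ < α₁ ε := by
      calc α₁ ‖x ω s‖ ≤ α₂ ‖x ω t₀‖ * Real.exp (g ω s) := hkey s hs
        _ ≤ α₂ ‖x ω t₀‖ * M :=
          mul_le_mul_of_nonneg_left h2 (hα₂nn _ (norm_nonneg _))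
        _ < (α₁ ε / M) * M := mul_lt_mul_of_pos_right hv hM0
        _ = α₁ ε := div_mul_cancel₀ _ hM0.ne'
    by_contra hcon
    push_neg at hcon
    exact absurd (hα₁m.monotoneOn (Set.mem_Ici.2 hε.le)
      (Set.mem_Ici.2 (norm_nonneg _)) hcon) (not_le.2 h3)
  · -- convergence
    filter_upwards [key, ha] with ω hkey hLa
    obtain ⟨L, hL, hLt⟩ := hLa
    have hgbot : Tendsto (g ω) atTop atBot := by
      have h1 : ∀ᶠ s in atTop, g ω s / (s - t₀) < L / 2 :=
        hLt.eventually_lt_const (by linarith)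
      have h2 : ∀ᶠ s in atTop, (0 : ℝ) < s - t₀ :=
        (eventually_gt_atTop t₀).mono fun s hs => by linarith
      have h3 : ∀ᶠ s in atTop, g ω s ≤ L / 2 * (s - t₀) := by
        filter_upwards [h1, h2] with s hs1 hs2
        have := (div_lt_iff₀ hs2).1 hs1
        linarith
      have h4 : Tendsto (fun s : ℝ => L / 2 * (s - t₀)) atTop atBot := by
        apply Tendsto.const_mul_atTop_of_neg (by linarith : L / 2 < 0)
        exact tendsto_atTop_add_const_right _ (-t₀) tendsto_id |>.congr fun s => by simp [id]; ring
      exact tendsto_atBot_mono' atTop h3 h4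
    have hexp : Tendsto (fun s => α₂ ‖x ω t₀‖ * Real.exp (g ω s)) atTop (𝓝 0) := by
      have := (Real.tendsto_exp_atBot.comp hgbot).const_mul (α₂ ‖x ω t₀‖)
      simpa using this
    rw [Metric.tendsto_nhds]
    intro ε hε
    have h5 : ∀ᶠ s in atTop, α₂ ‖x ω t₀‖ * Real.exp (g ω s) < α₁ ε :=
      hexp.eventually_lt_const (hα₁pos ε hε)
    filter_upwards [h5, eventually_ge_atTop t₀] with s hs1 hs2
    rw [dist_zero_right]
    have h6 : α₁ ‖x ω s‖ < α₁ ε := (hkey s hs2).trans_lt hs1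
    by_contra hcon
    push_neg at hcon
    exact absurd (hα₁m.monotoneOn (Set.mem_Ici.2 hε.le)
      (Set.mem_Ici.2 (norm_nonneg _)) hcon) (not_le.2 h6)
end

section
/- In the renewal setup, let 𝕊 be a finite set, let (ξ_k)_{k≥0} be an i.i.d. 𝕊-valued sequence with P[ξ₀ = i] = p_i, independent of the dwell-time sequence (S(k))_{k≥1}, and let λ : 𝕊 → ℝ assign a constant λ_i to each mode. Define the switching signal r(t) = ξ_k for t ∈ [t_k, t_{k+1}). Then, almost surely, (1/t)·∫_0^t λ_{r(h)} dh → Σ_{i∈𝕊} p_i·λ_i as t → ∞. -/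
open Set Filter MeasureTheory ProbabilityTheory

/-- The renewal (arrival) times: `renewalTime S k ω = S 1 ω + ⋯ + S k ω`, with
`renewalTime S 0 ω = 0`. -/
noncomputable def renewalTime {Ω : Type*} (S : ℕ → Ω → ℝ) (k : ℕ) (ω : Ω) : ℝ :=
  ∑ j ∈ Finset.Icc 1 k, S j ω

open Topology Finset

/-!
The rewards `λ_{ξ_k} S(k+1)` collected over the renewal intervals are i.i.d., because the modes
are independent of the dwell times, so by the strong law their averages tend to
`θ · Σ p_i λ_i`, while the renewal times satisfy `t_n / n → θ`. Since the integrand is constant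
on each `[t_k, t_{k+1})`, the integral up to `t ∈ [t_n, t_{n+1})` differs from the `n`-th reward
sum by at most `C · S(n+1) = o(n)`, and `t / n → θ`; dividing gives the limit `Σ p_i λ_i`.
-/

namespace ProbabilityTheory

variable {Ω : Type*} [MeasurableSpace Ω] {μ : Measure Ω}

lemma iIndepFun.sumElim {ι κ β : Type*} [MeasurableSpace β] {f : ι → Ω → β} {g : κ → Ω → β}
    (hf : iIndepFun f μ) (hg : iIndepFun g μ)
    (hfg : IndepFun (fun ω i ↦ f i ω) (fun ω j ↦ g j ω) μ) :
    iIndepFun (Sum.elim f g) μ := by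
  classical
  rw [iIndepFun_iff_measure_inter_preimage_eq_mul]
  intro s sets hsets
  have hL : ∀ i ∈ s.toLeft, MeasurableSet (sets (.inl i)) :=
    fun i hi ↦ hsets _ (mem_toLeft.1 hi)
  have hR : ∀ j ∈ s.toRight, MeasurableSet (sets (.inr j)) :=
    fun j hj ↦ hsets _ (mem_toRight.1 hj)
  have hsplit : ⋂ i ∈ s, Sum.elim f g i ⁻¹' sets i =
      (fun ω i ↦ f i ω) ⁻¹' (⋂ i ∈ s.toLeft, Function.eval i ⁻¹' sets (.inl i)) ∩
        (fun ω j ↦ g j ω) ⁻¹' (⋂ j ∈ s.toRight, Function.eval j ⁻¹' sets (.inr j)) := by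
    ext ω
    simp [Sum.forall]
  rw [hsplit, hfg.measure_inter_preimage_eq_mul _ _
      (s.toLeft.measurableSet_biInter fun i hi ↦ measurable_pi_apply i (hL i hi))
      (s.toRight.measurableSet_biInter fun j hj ↦ measurable_pi_apply j (hR j hj))]
  conv_rhs => rw [← s.toLeft_disjSum_toRight, prod_disjSum]
  simp only [Set.preimage_iInter₂]
  congr 1
  · exact hf.measure_inter_preimage_eq_mul _ hL
  · exact hg.measure_inter_preimage_eq_mul _ hR

lemma IdentDistrib.prodMk_of_indepFun {Ω' α β : Type*} [MeasurableSpace Ω'] [MeasurableSpace α]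
    [MeasurableSpace β] {ν : Measure Ω'} [IsFiniteMeasure μ] [IsFiniteMeasure ν]
    {X : Ω → α} {Y : Ω → β} {X' : Ω' → α} {Y' : Ω' → β}
    (hX : IdentDistrib X X' μ ν) (hY : IdentDistrib Y Y' μ ν)
    (h : IndepFun X Y μ) (h' : IndepFun X' Y' ν) :
    IdentDistrib (fun ω ↦ (X ω, Y ω)) (fun ω ↦ (X' ω, Y' ω)) μ ν where
  aemeasurable_fst := hX.aemeasurable_fst.prodMk hY.aemeasurable_fst
  aemeasurable_snd := hX.aemeasurable_snd.prodMk hY.aemeasurable_snd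
  map_eq := by
    rw [h.map_prod_eq_prod_map_map hX.aemeasurable_fst hY.aemeasurable_fst,
      h'.map_prod_eq_prod_map_map hX.aemeasurable_snd hY.aemeasurable_snd, hX.map_eq, hY.map_eq]

lemma ae_tendsto_sum_mul_div [IsProbabilityMeasure μ] {U V : ℕ → Ω → ℝ}
    (hUm : ∀ k, Measurable (U k)) (hVm : ∀ k, Measurable (V k))
    (hU : iIndepFun U μ) (hV : iIndepFun V μ)
    (hUV : IndepFun (fun ω k ↦ U k ω) (fun ω k ↦ V k ω) μ)
    (hUid : ∀ k, IdentDistrib (U k) (U 0) μ μ) (hVid : ∀ k, IdentDistrib (V k) (V 0) μ μ)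
    (hUint : Integrable (U 0) μ) (hVint : Integrable (V 0) μ) :
    ∀ᵐ ω ∂μ, Tendsto (fun n : ℕ ↦ (∑ k ∈ range n, U k ω * V k ω) / n) atTop
      (𝓝 (μ[U 0] * μ[V 0])) := by
  have hW := hU.sumElim hV hUV
  have hWm : ∀ i, Measurable (Sum.elim U V i) := Sum.forall.2 ⟨hUm, hVm⟩
  have hUV_diag : ∀ k, IndepFun (U k) (V k) μ := fun k ↦ hW.indepFun Sum.inl_ne_inr
  have hmul : Measurable fun x : ℝ × ℝ ↦ x.1 * x.2 := measurable_fst.mul measurable_snd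
  have := strong_law_ae_real (fun k ↦ U k * V k) ((hUV_diag 0).integrable_mul hUint hVint)
    (fun i j hij ↦ (hW.indepFun_prodMk_prodMk hWm (.inl i) (.inr i) (.inl j) (.inr j)
      (by simpa using hij) Sum.inl_ne_inr Sum.inr_ne_inl (by simpa using hij)).comp hmul hmul)
    (fun k ↦ ((hUid k).prodMk_of_indepFun (hVid k) (hUV_diag k) (hUV_diag 0)).comp hmul)
  rwa [(hUV_diag 0).integral_mul_eq_mul_integral (hUm 0).aestronglyMeasurable
    (hVm 0).aestronglyMeasurable] at this

lemma integral_comp_eq_sum_measureReal {𝕊 : Type*} [Fintype 𝕊] [MeasurableSpace 𝕊]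
    [MeasurableSingletonClass 𝕊] [IsFiniteMeasure μ] {X : Ω → 𝕊} (hX : Measurable X)
    (f : 𝕊 → ℝ) : ∫ ω, f (X ω) ∂μ = ∑ i, μ.real (X ⁻¹' {i}) * f i := by
  rw [← integral_map hX.aemeasurable (.of_discrete), integral_fintype .of_finite]
  simp [map_measureReal_apply hX (measurableSet_singleton _)]

end ProbabilityTheory

section StepFunction

variable {E : Type*} [NormedAddCommGroup E] {g : ℝ → E}

lemma intervalIntegrable_of_eqOn_Ico {a b : ℝ} {c : E} (hab : a ≤ b)
    (h : EqOn g (fun _ ↦ c) (Ico a b)) : IntervalIntegrable g volume a b := by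
  rw [intervalIntegrable_iff_integrableOn_Ioc_of_le hab, ← integrableOn_Icc_iff_integrableOn_Ioc,
    integrableOn_Icc_iff_integrableOn_Ico]
  exact (integrableOn_const measure_Ico_lt_top.ne).congr_fun h.symm measurableSet_Ico

variable [NormedSpace ℝ E] [CompleteSpace E]

lemma intervalIntegral_eq_of_eqOn_Ico {a b : ℝ} {c : E} (hab : a ≤ b)
    (h : EqOn g (fun _ ↦ c) (Ico a b)) : ∫ s in a..b, g s = (b - a) • c := by
  rw [intervalIntegral.integral_of_le hab, ← integral_Ico_eq_integral_Ioc,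
    setIntegral_congr_fun measurableSet_Ico h, setIntegral_const, Real.volume_real_Ico_of_le hab]

lemma intervalIntegral_eq_sum_add_of_eqOn_Ico {T : ℕ → ℝ} (hT : Monotone T) {c : ℕ → E}
    (hg : ∀ k, EqOn g (fun _ ↦ c k) (Ico (T k) (T (k + 1)))) {n : ℕ} {t : ℝ}
    (ht : t ∈ Icc (T n) (T (n + 1))) :
    ∫ s in T 0..t, g s = ∑ k ∈ range n, (T (k + 1) - T k) • c k + (t - T n) • c n := by
  have hint k : IntervalIntegrable g volume (T k) (T (k + 1)) :=
    intervalIntegrable_of_eqOn_Ico (hT k.le_succ) (hg k)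
  have hlast : EqOn g (fun _ ↦ c n) (Ico (T n) t) := (hg n).mono (Ico_subset_Ico_right ht.2)
  rw [← intervalIntegral.integral_add_adjacent_intervals
      (IntervalIntegrable.trans_iterate fun k _ ↦ hint k)
      (intervalIntegrable_of_eqOn_Ico ht.1 hlast),
    ← intervalIntegral.sum_integral_adjacent_intervals fun k _ ↦ hint k,
    intervalIntegral_eq_of_eqOn_Ico ht.1 hlast]
  congr 1
  exact sum_congr rfl fun k _ ↦ intervalIntegral_eq_of_eqOn_Ico (hT k.le_succ) (hg k)

end StepFunction

lemma Monotone.exists_tendsto_atTop_forall_mem_Ico {T : ℕ → ℝ} (hT : Monotone T)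
    (hTtop : Tendsto T atTop atTop) :
    ∃ N : ℝ → ℕ, Tendsto N atTop atTop ∧ ∀ᶠ t in atTop, t ∈ Ico (T (N t)) (T (N t + 1)) := by
  classical
  have hex (t : ℝ) : ∃ n, T 0 ≤ t → t ∈ Ico (T n) (T (n + 1)) := by
    have hlt : ∃ n, t < T (n + 1) :=
      ((tendsto_add_atTop_iff_nat 1).2 hTtop).eventually_gt_atTop t |>.exists
    refine ⟨Nat.find hlt, fun ht ↦ ⟨?_, Nat.find_spec hlt⟩⟩
    rcases h : Nat.find hlt with _ | n
    · exact ht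
    · exact not_lt.1 (Nat.find_min hlt (h ▸ n.lt_succ_self))
  choose N hN using hex
  have hmem : ∀ᶠ t in atTop, t ∈ Ico (T (N t)) (T (N t + 1)) :=
    (eventually_ge_atTop (T 0)).mono hN
  refine ⟨N, tendsto_atTop.2 fun K ↦ ?_, hmem⟩
  filter_upwards [hmem, eventually_ge_atTop (T K)] with t ht hKt
  by_contra! hlt
  exact (hKt.trans_lt ht.2).not_ge (hT hlt)

lemma tendsto_div_of_forall_mem_Ico {T A : ℕ → ℝ} {F : ℝ → ℝ} {C θ a : ℝ} (hθ : 0 < θ)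
    (hT : Monotone T) (hTlim : Tendsto (fun n : ℕ ↦ T n / n) atTop (𝓝 θ))
    (hA : Tendsto (fun n : ℕ ↦ A n / n) atTop (𝓝 a))
    (hF : ∀ n, ∀ t ∈ Ico (T n) (T (n + 1)), |F t - A n| ≤ (T (n + 1) - T n) * C) :
    Tendsto (fun t ↦ F t / t) atTop (𝓝 (a / θ)) := by
  have hTtop : Tendsto T atTop atTop := by
    refine (hTlim.pos_mul_atTop hθ tendsto_natCast_atTop_atTop).congr' ?_
    filter_upwards [eventually_ne_atTop 0] with n hn
    field_simp
  have hTsucc : Tendsto (fun n : ℕ ↦ T (n + 1) / n) atTop (𝓝 θ) := by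
    have := ((tendsto_add_atTop_iff_nat 1).2 hTlim).div (tendsto_natCast_div_add_atTop (1 : ℝ))
      one_ne_zero
    rw [div_one] at this
    refine this.congr' ?_
    filter_upwards [eventually_ne_atTop 0] with n hn
    simp only [Pi.div_apply, Nat.cast_add, Nat.cast_one]
    field_simp
  -- `N` plays the role of the renewal counting process `N(t)`.
  obtain ⟨N, hN, hmem⟩ := hT.exists_tendsto_atTop_forall_mem_Ico hTtop
  have hNpos : ∀ᶠ t in atTop, (0 : ℝ) < N t :=
    (hN.eventually_gt_atTop 0).mono fun _ h ↦ Nat.cast_pos.2 h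
  have hlow := hTlim.comp hN
  have hup := hTsucc.comp hN
  have htN : Tendsto (fun t ↦ t / N t) atTop (𝓝 θ) := by
    refine tendsto_of_tendsto_of_tendsto_of_le_of_le' hlow hup ?_ ?_ <;>
      filter_upwards [hmem, hNpos] with t ht hpos
    · exact div_le_div_of_nonneg_right ht.1 hpos.le
    · exact div_le_div_of_nonneg_right ht.2.le hpos.le
  have herr : Tendsto (fun t ↦ (F t - A (N t)) / N t) atTop (𝓝 0) := by
    refine squeeze_zero_norm' ?_ (by simpa using (hup.sub hlow).mul_const C)
    filter_upwards [hmem, hNpos] with t ht hpos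
    rw [Real.norm_eq_abs, abs_div, abs_of_pos hpos, ← sub_div, div_mul_eq_mul_div]
    exact div_le_div_of_nonneg_right (hF _ _ ht) hpos.le
  have hFN : Tendsto (fun t ↦ F t / N t) atTop (𝓝 a) := by
    simpa [sub_div] using herr.add (hA.comp hN)
  refine (hFN.div htN hθ.ne').congr' ?_
  filter_upwards [hNpos] with t hpos
  exact div_div_div_cancel_right₀ hpos.ne' _ _

lemma tendsto_integral_div_of_eqOn_Ico {T c : ℕ → ℝ} {g : ℝ → ℝ} {C θ a : ℝ} (hθ : 0 < θ)
    (hT : Monotone T) (hTlim : Tendsto (fun n : ℕ ↦ T n / n) atTop (𝓝 θ)) (hc : ∀ k, |c k| ≤ C)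
    (hg : ∀ k, EqOn g (fun _ ↦ c k) (Ico (T k) (T (k + 1))))
    (hA : Tendsto (fun n : ℕ ↦ (∑ k ∈ range n, (T (k + 1) - T k) * c k) / n) atTop (𝓝 a)) :
    Tendsto (fun t ↦ (∫ s in T 0..t, g s) / t) atTop (𝓝 (a / θ)) := by
  refine tendsto_div_of_forall_mem_Ico (C := C) hθ hT hTlim hA fun n t ht ↦ ?_
  rw [intervalIntegral_eq_sum_add_of_eqOn_Ico hT hg (Ico_subset_Icc_self ht)]
  simp only [smul_eq_mul, add_sub_cancel_left, abs_mul, abs_of_nonneg (sub_nonneg.2 ht.1)]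
  exact mul_le_mul (by linarith [ht.2]) (hc n) (abs_nonneg _) (sub_nonneg.2 (hT n.le_succ))

@[simp]
lemma renewalTime_zero {Ω : Type*} (S : ℕ → Ω → ℝ) (ω : Ω) : renewalTime S 0 ω = 0 := by
  simp [renewalTime]

lemma renewalTime_succ {Ω : Type*} (S : ℕ → Ω → ℝ) (n : ℕ) (ω : Ω) :
    renewalTime S (n + 1) ω = renewalTime S n ω + S (n + 1) ω :=
  sum_Icc_succ_top (by omega) _

lemma renewalTime_eq_sum_range {Ω : Type*} (S : ℕ → Ω → ℝ) (n : ℕ) (ω : Ω) :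
    renewalTime S n ω = ∑ k ∈ range n, S (k + 1) ω := by
  induction n with
  | zero => simp
  | succ n ih => rw [renewalTime_succ, ih, sum_range_succ]

lemma ae_tendsto_renewalTime_div {Ω : Type*} [MeasurableSpace Ω] {P : Measure Ω}
    {S : ℕ → Ω → ℝ} (hSindep : iIndepFun S P) (hSident : ∀ k ≥ 1, IdentDistrib (S k) (S 1) P P)
    (hSint : Integrable (S 1) P) :
    ∀ᵐ ω ∂P, Tendsto (fun n : ℕ ↦ renewalTime S n ω / n) atTop (𝓝 P[S 1]) := by
  simpa only [renewalTime_eq_sum_range] using strong_law_ae_real (fun k ↦ S (k + 1)) hSint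
    (fun i j hij ↦ hSindep.indepFun (by simpa using hij)) fun k ↦ hSident _ k.succ_pos

/-- Ergodic computation under renewal-process switching with i.i.d. modes: the time
average of the mode-dependent constant rate `λ_{r(t)}` converges almost surely to its
mean `Σ_i p_i λ_i` under the mode distribution. -/
theorem stmt_13 {Ω : Type*} [MeasurableSpace Ω] (P : Measure Ω) [IsProbabilityMeasure P]
    {𝕊 : Type*} [Fintype 𝕊] [MeasurableSpace 𝕊] [MeasurableSingletonClass 𝕊]
    -- the i.i.d. dwell times
    (S : ℕ → Ω → ℝ) (hSmeas : ∀ k, Measurable (S k))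
    (hSindep : iIndepFun S P)
    (hSident : ∀ k ≥ 1, IdentDistrib (S k) (S 1) P P)
    (hSpos : ∀ᵐ ω ∂P, 0 < S 1 ω)
    (hSint : Integrable (S 1) P)
    (θ : ℝ) (hθpos : 0 < θ) (hθ : (∫ ω, S 1 ω ∂P) = θ)
    -- the i.i.d. modes, independent of the dwell times
    (ξ : ℕ → Ω → 𝕊) (hξmeas : ∀ k, Measurable (ξ k))
    (hξindep : iIndepFun ξ P)
    (hξident : ∀ k, IdentDistrib (ξ k) (ξ 0) P P)
    (hξS : IndepFun (fun ω k => ξ k ω) (fun ω k => S k ω) P)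
    (p : 𝕊 → ℝ) (hp : ∀ i, (P {ω | ξ 0 ω = i}).toReal = p i)
    -- the mode-dependent constant rates
    (lam : 𝕊 → ℝ)
    -- the switching signal `r(t) = ξ_k` on `[t_k, t_{k+1})`
    (r : ℝ → Ω → 𝕊)
    (hr : ∀ᵐ ω ∂P, ∀ k, ∀ s ∈ Set.Ico (renewalTime S k ω) (renewalTime S (k + 1) ω),
      r s ω = ξ k ω) :
    ∀ᵐ ω ∂P,
      Filter.Tendsto (fun t : ℝ => (∫ h in (0 : ℝ)..t, lam (r h ω)) / t)
        Filter.atTop (nhds (∑ i : 𝕊, p i * lam i)) := by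
  have hlam : Measurable lam := .of_discrete
  have hmean : ∫ ω, lam (ξ 0 ω) ∂P = ∑ i, p i * lam i := by
    rw [integral_comp_eq_sum_measureReal (hξmeas 0)]
    exact sum_congr rfl fun i _ ↦ by rw [measureReal_def, ← hp i]; rfl
  have hreward := ae_tendsto_sum_mul_div (U := fun k ↦ S (k + 1)) (V := fun k ω ↦ lam (ξ k ω))
    (fun k ↦ hSmeas _) (fun k ↦ hlam.comp (hξmeas k)) (hSindep.precomp Nat.succ_injective)
    (hξindep.comp _ fun _ ↦ hlam)
    (hξS.symm.comp (measurable_pi_lambda _ fun k ↦ measurable_pi_apply (k + 1))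
      (measurable_pi_lambda _ fun k ↦ hlam.comp (measurable_pi_apply k)))
    (fun k ↦ hSident _ k.succ_pos) (fun k ↦ (hξident k).comp hlam) hSint
    (Integrable.of_finite.comp_measurable (hξmeas 0))
  have hSpos_all : ∀ᵐ ω ∂P, ∀ k, 0 < S (k + 1) ω :=
    ae_all_iff.2 fun k ↦ (hSident _ k.succ_pos).symm.ae_snd measurableSet_Ioi hSpos
  rw [hθ, hmean] at hreward
  filter_upwards [ae_tendsto_renewalTime_div hSindep hSident hSint, hreward, hSpos_all, hr]
    with ω hT hA hpos hrω
  have hmono : Monotone (renewalTime S · ω) :=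
    monotone_nat_of_le_succ fun k ↦ by rw [renewalTime_succ]; linarith [hpos k]
  have := tendsto_integral_div_of_eqOn_Ico hθpos hmono (hθ ▸ hT)
    (fun k ↦ single_le_sum (fun i _ ↦ abs_nonneg (lam i)) (mem_univ (ξ k ω)))
    (fun k s hs ↦ congrArg lam (hrω k s hs))
    (by simpa only [renewalTime_succ, add_sub_cancel_left] using hA)
  rwa [renewalTime_zero, mul_div_cancel_left₀ _ hθpos.ne'] at this
end
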